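/- Fix a with 0 < a ≤ √2/4. Then for every r > 0 the cubic g(z) = z³ + a r z² + (r+1) z + a r² has exactly one real root σ(r), it satisfies g′(σ(r)) > 0, and the function r ↦ σ(r) is strictly decreasing on (0,∞), i.e. dσ/dr = −(aσ² + σ + 2ar)/g′(σ) < 0 for all r > 0. -/

import Mathlib

/-!
For `a² ≤ 1/8` the discriminant of `g` is negative. At a real root `σ` the cofactor
`(g z - g σ) / (z - σ)` is a monic quadratic whose discriminant, times `g'(σ)²`, is that of `g`;
so it is positive everywhere, `g` has the sign of `z - σ`, `σ` is its only real root and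
`g'(σ) > 0`. The roots are negative, which makes `∂g/∂r = a z² + z + 2 a r` positive there, so
`g_{r'}(σ(r)) > 0` for `r' > r`, i.e. `σ(r') < σ(r)`. Comparing `g_{r'}(σ(r'))` with
`g_r(σ(r))` through both factorizations writes the difference quotient of `σ` as a continuous
function of `r'`, whose value at `r` is the derivative.
-/

open Set

section MonicCubic

variable {p q s t z : ℝ}

noncomputable def monicCubic (p q s z : ℝ) : ℝ := z ^ 3 + p * z ^ 2 + q * z + s

noncomputable def cubicCofactor (p q t z : ℝ) : ℝ := z ^ 2 + (t + p) * z + (t ^ 2 + p * t + q)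

theorem monicCubic_sub_monicCubic (p q s t z : ℝ) :
    monicCubic p q s z - monicCubic p q s t = (z - t) * cubicCofactor p q t z := by
  unfold monicCubic cubicCofactor
  ring

theorem cubicCofactor_self (p q t : ℝ) :
    cubicCofactor p q t t = 3 * t ^ 2 + 2 * p * t + q := by
  unfold cubicCofactor
  ring

theorem monicCubic_eq_mul_cubicCofactor (ht : monicCubic p q s t = 0) :
    monicCubic p q s z = (z - t) * cubicCofactor p q t z := by
  rw [← monicCubic_sub_monicCubic, ht, sub_zero]

theorem sq_mul_discrim_cubicCofactor (ht : monicCubic p q s t = 0) :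
    (3 * t ^ 2 + 2 * p * t + q) ^ 2 * discrim 1 (t + p) (t ^ 2 + p * t + q) =
      (⟨1, p, q, s⟩ : Cubic ℝ).discr := by
  unfold monicCubic at ht
  simp only [discrim, Cubic.discr]
  -- `discr` is quadratic in `s` and equals the left side at `s = -(t³ + p t² + q t)`.
  linear_combination (4 * p ^ 3 - 18 * p * q + 27 * s - 27 * (t ^ 3 + p * t ^ 2 + q * t)) * ht

theorem cubicCofactor_pos (hd : (⟨1, p, q, s⟩ : Cubic ℝ).discr < 0)
    (ht : monicCubic p q s t = 0) (z : ℝ) : 0 < cubicCofactor p q t z := by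
  have hD : discrim 1 (t + p) (t ^ 2 + p * t + q) < 0 :=
    neg_of_mul_neg_right ((sq_mul_discrim_cubicCofactor ht).symm ▸ hd) (sq_nonneg _)
  unfold cubicCofactor
  rw [discrim] at hD
  nlinarith [sq_nonneg (2 * z + t + p)]

theorem monicCubic_deriv_pos (hd : (⟨1, p, q, s⟩ : Cubic ℝ).discr < 0)
    (ht : monicCubic p q s t = 0) : 0 < 3 * t ^ 2 + 2 * p * t + q :=
  cubicCofactor_self p q t ▸ cubicCofactor_pos hd ht t

theorem monicCubic_pos_iff (hd : (⟨1, p, q, s⟩ : Cubic ℝ).discr < 0)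
    (ht : monicCubic p q s t = 0) : 0 < monicCubic p q s z ↔ t < z := by
  rw [monicCubic_eq_mul_cubicCofactor ht, mul_pos_iff_of_pos_right (cubicCofactor_pos hd ht z),
    sub_pos]

theorem monicCubic_neg_iff (hd : (⟨1, p, q, s⟩ : Cubic ℝ).discr < 0)
    (ht : monicCubic p q s t = 0) : monicCubic p q s z < 0 ↔ z < t := by
  rw [monicCubic_eq_mul_cubicCofactor ht, ← neg_pos, ← neg_mul,
    mul_pos_iff_of_pos_right (cubicCofactor_pos hd ht z), neg_sub, sub_pos]

theorem eq_of_monicCubic_eq_zero (hd : (⟨1, p, q, s⟩ : Cubic ℝ).discr < 0)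
    (ht : monicCubic p q s t = 0) (hz : monicCubic p q s z = 0) : z = t :=
  le_antisymm (not_lt.1 fun h => ((monicCubic_pos_iff hd ht).2 h).ne' hz)
    (not_lt.1 fun h => ((monicCubic_neg_iff hd ht).2 h).ne hz)

end MonicCubic

section Indicial

noncomputable def indicialCubic (a r : ℝ) : ℝ → ℝ := monicCubic (a * r) (r + 1) (a * r ^ 2)

variable {a r z : ℝ} {σ : ℝ → ℝ}

theorem sq_le_one_div_eight_of_le_sqrt_two_div_four (ha : 0 ≤ a) (ha' : a ≤ √2 / 4) :
    a ^ 2 ≤ 1 / 8 :=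
  calc a ^ 2 ≤ (√2 / 4) ^ 2 := pow_le_pow_left₀ ha ha' 2
    _ = 1 / 8 := by rw [div_pow, Real.sq_sqrt zero_le_two]; norm_num

theorem indicialCubic_discr_neg (hA : a ^ 2 ≤ 1 / 8) (hr : 0 < r) :
    (⟨1, a * r, r + 1, a * r ^ 2⟩ : Cubic ℝ).discr < 0 := by
  have h : (⟨1, a * r, r + 1, a * r ^ 2⟩ : Cubic ℝ).discr =
      a ^ 2 * r ^ 2 * (20 * r + 1 - 8 * r ^ 2) - 4 * a ^ 4 * r ^ 5 - 4 * (r + 1) ^ 3 := by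
    simp only [Cubic.discr]
    ring
  rw [h]
  nlinarith [mul_le_mul_of_nonneg_right hA (by positivity : 0 ≤ r ^ 2 * (20 * r + 1)),
    mul_nonneg (sq_nonneg a) (by positivity : 0 ≤ r ^ 4), pow_pos hr 5,
    mul_nonneg (pow_nonneg (sq_nonneg a) 2) (pow_pos hr 5).le]

theorem indicialCubic_pos_of_nonneg (ha : 0 < a) (hr : 0 < r) (hz : 0 ≤ z) :
    0 < indicialCubic a r z := by
  unfold indicialCubic monicCubic
  have : 0 < a * r ^ 2 := by positivity
  have : 0 ≤ a * r * z ^ 2 := by positivity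
  nlinarith [pow_nonneg hz 3, mul_nonneg hr.le hz]

theorem neg_of_indicialCubic_eq_zero (ha : 0 < a) (hr : 0 < r)
    (hz : indicialCubic a r z = 0) : z < 0 :=
  not_le.1 fun h => (indicialCubic_pos_of_nonneg ha hr h).ne' hz

theorem exists_indicialCubic_eq_zero (ha : 0 ≤ a) (hr : 0 < r) :
    ∃ z, indicialCubic a r z = 0 := by
  set M := 1 + a * r + a * r ^ 2
  have hM : 1 + a * r ^ 2 ≤ M := by simp only [M]; nlinarith [mul_nonneg ha hr.le]
  have hcont : ContinuousOn (indicialCubic a r) (Icc (-M) 0) := by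
    unfold indicialCubic monicCubic
    fun_prop
  have hmem : (0 : ℝ) ∈ Icc (indicialCubic a r (-M)) (indicialCubic a r 0) := by
    unfold indicialCubic monicCubic
    constructor <;> nlinarith [mul_nonneg ha (sq_nonneg r)]
  obtain ⟨z, -, hz⟩ :=
    intermediate_value_Icc (by nlinarith [mul_nonneg ha (sq_nonneg r)]) hcont hmem
  exact ⟨z, hz⟩

theorem indicialCubic_sub_indicialCubic (a r y z : ℝ) :
    indicialCubic a y z - indicialCubic a r z = (y - r) * (a * z ^ 2 + z + a * (r + y)) := by
  unfold indicialCubic monicCubic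
  ring

theorem mul_sq_add_add_mul_pos_of_indicialCubic_eq_zero (ha : 0 < a) (hr : 0 < r)
    (hz : indicialCubic a r z = 0) : 0 < a * z ^ 2 + z + a * r := by
  have hneg := neg_of_indicialCubic_eq_zero ha hr hz
  unfold indicialCubic monicCubic at hz
  have h : r * (a * z ^ 2 + z + a * r) = -z * (z ^ 2 + 1) := by linear_combination hz
  exact pos_of_mul_pos_right (h ▸ mul_pos (neg_pos.2 hneg) (by positivity)) hr.le

theorem strictAntiOn_of_indicialCubic_eq_zero (ha : 0 < a) (hA : a ^ 2 ≤ 1 / 8)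
    (hσ : ∀ r, 0 < r → indicialCubic a r (σ r) = 0) : StrictAntiOn σ (Ioi 0) := by
  intro r hr y hy hry
  have hroot := hσ r hr
  have hpos : 0 < indicialCubic a y (σ r) := by
    have h := indicialCubic_sub_indicialCubic a r y (σ r)
    rw [hroot, sub_zero] at h
    rw [h]
    exact mul_pos (sub_pos.2 hry)
      (by nlinarith [mul_sq_add_add_mul_pos_of_indicialCubic_eq_zero ha hr hroot, mul_pos ha hy])
  exact (monicCubic_pos_iff (indicialCubic_discr_neg hA hy) (hσ y hy)).1 hpos

theorem continuousAt_of_indicialCubic_eq_zero (hA : a ^ 2 ≤ 1 / 8)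
    (hσ : ∀ r, 0 < r → indicialCubic a r (σ r) = 0) (hr : 0 < r) : ContinuousAt σ r := by
  have hcont (b : ℝ) : ContinuousAt (fun y => indicialCubic a y b) r := by
    unfold indicialCubic monicCubic
    fun_prop
  refine tendsto_order.2 ⟨fun b hb => ?_, fun b hb => ?_⟩
  · have hneg := (monicCubic_neg_iff (indicialCubic_discr_neg hA hr) (hσ r hr)).2 hb
    filter_upwards [(hcont b).eventually (eventually_lt_nhds hneg), Ioi_mem_nhds hr]
      with y hy hy0
    exact (monicCubic_neg_iff (indicialCubic_discr_neg hA hy0) (hσ y hy0)).1 hy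
  · have hpos := (monicCubic_pos_iff (indicialCubic_discr_neg hA hr) (hσ r hr)).2 hb
    filter_upwards [(hcont b).eventually (eventually_gt_nhds hpos), Ioi_mem_nhds hr]
      with y hy hy0
    exact (monicCubic_pos_iff (indicialCubic_discr_neg hA hy0) (hσ y hy0)).1 hy

theorem hasDerivAt_of_indicialCubic_eq_zero (hA : a ^ 2 ≤ 1 / 8)
    (hσ : ∀ r, 0 < r → indicialCubic a r (σ r) = 0) (hr : 0 < r) :
    HasDerivAt σ
      (-(a * σ r ^ 2 + σ r + 2 * a * r) / (3 * σ r ^ 2 + 2 * a * r * σ r + (r + 1))) r := by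
  set φ : ℝ → ℝ := fun y =>
    -(a * σ r ^ 2 + σ r + a * (r + y)) / cubicCofactor (a * y) (y + 1) (σ y) (σ r)
  have hslope (y : ℝ) (hy : 0 < y) (hyr : y ≠ r) : slope σ r y = φ y := by
    have hC := cubicCofactor_pos (indicialCubic_discr_neg hA hy) (hσ y hy) (σ r)
    have hr' := indicialCubic_sub_indicialCubic a r y (σ r)
    have hy' := monicCubic_sub_monicCubic (a * y) (y + 1) (a * y ^ 2) (σ y) (σ r)
    rw [hσ r hr, sub_zero] at hr'
    unfold indicialCubic at hr'
    rw [show monicCubic (a * y) (y + 1) (a * y ^ 2) (σ y) = 0 from hσ y hy] at hy'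
    rw [slope_def_field, div_eq_div_iff (sub_ne_zero.2 hyr) hC.ne']
    linear_combination hy' - hr'
  have hφ : ContinuousAt φ r := by
    have := continuousAt_of_indicialCubic_eq_zero hA hσ hr
    simp only [φ, cubicCofactor]
    refine ContinuousAt.div (by fun_prop) (by fun_prop) ?_
    simpa only [cubicCofactor] using
      (cubicCofactor_pos (indicialCubic_discr_neg hA hr) (hσ r hr) (σ r)).ne'
  have hφr : φ r =
      -(a * σ r ^ 2 + σ r + 2 * a * r) / (3 * σ r ^ 2 + 2 * a * r * σ r + (r + 1)) := by
    simp only [φ, cubicCofactor_self]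
    ring
  rw [hasDerivAt_iff_tendsto_slope, ← hφr]
  refine (hφ.tendsto.mono_left nhdsWithin_le_nhds).congr' ?_
  filter_upwards [nhdsWithin_le_nhds (Ioi_mem_nhds hr), self_mem_nhdsWithin] with y hy hyr
  exact (hslope y hy hyr).symm

end Indicial

/-- for `0 < a ≤ √2/4`, the cubic `z³ + a r z² + (r+1) z + a r²`
has exactly one real root `σ(r)` for each `r > 0`; it satisfies `g′(σ(r)) > 0`,
and (for any function `σ` selecting these roots) `σ` is strictly decreasing on
`(0,∞)`, with `dσ/dr = −(aσ² + σ + 2ar)/g′(σ) < 0` for all `r > 0`. -/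
theorem stmt11 (a : ℝ) (ha : 0 < a) (ha' : a ≤ Real.sqrt 2 / 4) :
    (∀ r : ℝ, 0 < r → ∃! σ : ℝ, σ^3 + a*r*σ^2 + (r+1)*σ + a*r^2 = 0) ∧
    (∀ σ : ℝ → ℝ,
      (∀ r : ℝ, 0 < r → (σ r)^3 + a*r*(σ r)^2 + (r+1)*(σ r) + a*r^2 = 0) →
      (∀ r : ℝ, 0 < r → 0 < 3*(σ r)^2 + 2*a*r*(σ r) + (r+1)) ∧
      (∀ r : ℝ, 0 < r →
        HasDerivAt σ
          (-(a*(σ r)^2 + σ r + 2*a*r) / (3*(σ r)^2 + 2*a*r*(σ r) + (r+1))) r ∧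
        -(a*(σ r)^2 + σ r + 2*a*r) / (3*(σ r)^2 + 2*a*r*(σ r) + (r+1)) < 0) ∧
      StrictAntiOn σ (Set.Ioi 0)) := by
  have hA := sq_le_one_div_eight_of_le_sqrt_two_div_four ha.le ha'
  refine ⟨fun r hr => ?_, fun σ hσ => ?_⟩
  · obtain ⟨z, hz⟩ := exists_indicialCubic_eq_zero ha.le hr
    exact ⟨z, hz, fun y hy => eq_of_monicCubic_eq_zero (indicialCubic_discr_neg hA hr) hz hy⟩
  have hderiv_pos (r : ℝ) (hr : 0 < r) : 0 < 3*(σ r)^2 + 2*a*r*(σ r) + (r+1) := by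
    linarith [monicCubic_deriv_pos (indicialCubic_discr_neg hA hr) (hσ r hr)]
  refine ⟨hderiv_pos, fun r hr => ⟨hasDerivAt_of_indicialCubic_eq_zero hA hσ hr, ?_⟩,
    strictAntiOn_of_indicialCubic_eq_zero ha hA hσ⟩
  refine div_neg_of_neg_of_pos ?_ (hderiv_pos r hr)
  linarith [mul_sq_add_add_mul_pos_of_indicialCubic_eq_zero ha hr (hσ r hr), mul_pos ha hr]
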